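/- Let Δ be a (d−1)-dimensional simplicial complex on [n] with indeg(I_Δ) ≥ d. Then indeg(I_Δ) ≤ d + 1, and indeg(I_Δ) = d + 1 holds if and only if I_Δ has a (d+1)-linear resolution. -/

import Mathlib

open MvPolynomial Finset

noncomputable section

namespace ArxivPaper

variable (K : Type) [Field K] (n : ℕ)

/-! ### Graded Betti numbers via the Koszul complex

For an ideal `I` of `S = K[x_1,…,x_n]`, the graded Betti number
`β_{i,j}(I) = dim_K Tor_i^S(K, I)_j` is computed as the `K`-dimension of the degree-`j`
component of the `i`-th homology of `I ⊗_S K_•(x_1,…,x_n)`, where `K_•(x_1,…,x_n)` is the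
Koszul complex (a free resolution of `K`).  A basis element `e_T ⊗ p` (`T ⊆ {1,…,n}` with
`|T| = i`, `p ∈ I`) of the `i`-th term of the tensored complex is encoded as the function
sending `T` to `p`. -/

lemma isHomog_smul (c : K) {p : MvPolynomial (Fin n) K} {m : ℕ}
    (hp : p.IsHomogeneous m) : (c • p).IsHomogeneous m := by
  rw [MvPolynomial.smul_eq_C_mul]
  simpa using (MvPolynomial.isHomogeneous_C (Fin n) c).mul hp

/-- The Koszul differential. -/
def koszulD :
    ((Finset (Fin n)) → MvPolynomial (Fin n) K) →ₗ[K]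
      ((Finset (Fin n)) → MvPolynomial (Fin n) K) where
  toFun f T := ∑ v ∈ Tᶜ,
    ((-1 : MvPolynomial (Fin n) K) ^ ((T.filter (fun w => w < v)).card)) *
      (MvPolynomial.X v * f (insert v T))
  map_add' f g := by
    funext T
    simp [mul_add, Finset.sum_add_distrib]
  map_smul' c f := by
    funext T
    simp [Finset.smul_sum, mul_smul_comm]

/-- The degree-`j` component of the `i`-th term of `I ⊗ K_•(x_1,…,x_n)`:
families `(f_T)_T` with `f_T ∈ I` homogeneous of degree `j - |T|`, supported on `|T| = i`
(the exterior generator `e_T` has degree `|T|`). -/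
def chainPiece (I : Ideal (MvPolynomial (Fin n) K)) (i j : ℕ) :
    Submodule K ((Finset (Fin n)) → MvPolynomial (Fin n) K) where
  carrier := {f | ∀ T : Finset (Fin n),
    f T ∈ I ∧ (f T).IsHomogeneous (j - T.card) ∧ (T.card ≠ i → f T = 0)}
  add_mem' := by
    intro f g hf hg T
    refine ⟨I.add_mem (hf T).1 (hg T).1, (hf T).2.1.add (hg T).2.1, fun h => ?_⟩
    show f T + g T = 0
    rw [(hf T).2.2 h, (hg T).2.2 h, add_zero]
  zero_mem' := by
    intro T
    exact ⟨I.zero_mem, MvPolynomial.isHomogeneous_zero _ _ _, fun _ => rfl⟩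
  smul_mem' := by
    intro c f hf T
    refine ⟨?_, isHomog_smul K n c (hf T).2.1, fun h => ?_⟩
    · show c • f T ∈ I
      rw [MvPolynomial.smul_eq_C_mul]
      exact I.mul_mem_left _ (hf T).1
    · show c • f T = 0
      rw [(hf T).2.2 h, smul_zero]

/-- The (ungraded) `i`-th term of `I ⊗ K_•(x_1,…,x_n)`. -/
def chainAll (I : Ideal (MvPolynomial (Fin n) K)) (i : ℕ) :
    Submodule K ((Finset (Fin n)) → MvPolynomial (Fin n) K) where
  carrier := {f | ∀ T : Finset (Fin n), f T ∈ I ∧ (T.card ≠ i → f T = 0)}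
  add_mem' := by
    intro f g hf hg T
    refine ⟨I.add_mem (hf T).1 (hg T).1, fun h => ?_⟩
    show f T + g T = 0
    rw [(hf T).2 h, (hg T).2 h, add_zero]
  zero_mem' := fun T => ⟨I.zero_mem, fun _ => rfl⟩
  smul_mem' := by
    intro c f hf T
    refine ⟨?_, fun h => ?_⟩
    · show c • f T ∈ I
      rw [MvPolynomial.smul_eq_C_mul]
      exact I.mul_mem_left _ (hf T).1
    · show c • f T = 0
      rw [(hf T).2 h, smul_zero]

/-- The graded Betti number `β_{i,j}(I) = dim_K Tor_i^S(K, I)_j`. -/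
def bettiNumber (I : Ideal (MvPolynomial (Fin n) K)) (i j : ℕ) : ℕ :=
  Module.finrank K
    (↥(chainPiece K n I i j ⊓ LinearMap.ker (koszulD K n)) ⧸
      Submodule.comap (chainPiece K n I i j ⊓ LinearMap.ker (koszulD K n)).subtype
        (Submodule.map (koszulD K n) (chainPiece K n I (i+1) j)))

/-- Castelnuovo–Mumford regularity `reg(I) = sup{ j - i : β_{i,j}(I) ≠ 0 }`. -/
def reg (I : Ideal (MvPolynomial (Fin n) K)) : ℤ :=
  sSup {m : ℤ | ∃ i j : ℕ, bettiNumber K n I i j ≠ 0 ∧ m = (j : ℤ) - (i : ℤ)}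

/-- The initial degree `indeg(I) = inf{ m : I_m ≠ 0 }`. -/
def indeg (I : Ideal (MvPolynomial (Fin n) K)) : ℕ :=
  sInf {m : ℕ | ∃ p ∈ I, p ≠ 0 ∧ p.IsHomogeneous m}

/-- `I` has a `d`-linear resolution iff `reg(I) = indeg(I) = d`. -/
def HasLinearRes (I : Ideal (MvPolynomial (Fin n) K)) (d : ℕ) : Prop :=
  reg K n I = (d : ℤ) ∧ indeg K n I = d

/-- Projective dimension: `projdim(I) = sup{ i : Tor_i^S(K, I) ≠ 0 }`,
with `Tor_i^S(K, I)` computed as Koszul homology. -/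
def projdim (I : Ideal (MvPolynomial (Fin n) K)) : ℕ :=
  sSup {i : ℕ | ¬ Subsingleton
    (↥(chainAll K n I i ⊓ LinearMap.ker (koszulD K n)) ⧸
      Submodule.comap (chainAll K n I i ⊓ LinearMap.ker (koszulD K n)).subtype
        (Submodule.map (koszulD K n) (chainAll K n I (i+1))))}

/-- The graded maximal ideal `(x_1, …, x_n)`. -/
def maxIdeal : Ideal (MvPolynomial (Fin n) K) := Ideal.span (Set.range MvPolynomial.X)

/-- The minimal number of generators `μ(I) = dim_K I / mI`. -/
def mu (I : Ideal (MvPolynomial (Fin n) K)) : ℕ :=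
  Module.finrank K
    ((Submodule.restrictScalars K I) ⧸
      Submodule.comap (Submodule.restrictScalars K I).subtype
        (Submodule.restrictScalars K (maxIdeal K n * I)))

/-- The depth of `S/I`: the longest weakly regular sequence on `S/I` consisting of elements
of the graded maximal ideal. -/
def depthQuot (I : Ideal (MvPolynomial (Fin n) K)) : ℕ :=
  sSup {r : ℕ | ∃ rs : List (MvPolynomial (Fin n) K), rs.length = r ∧
    (∀ x ∈ rs, x ∈ maxIdeal K n) ∧
    RingTheory.Sequence.IsWeaklyRegular (MvPolynomial (Fin n) K ⧸ I) rs}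

/-! ### Reduced simplicial homology

A simplicial complex on the vertex set `Fin n` is encoded by its (finite) set of faces
`Δ : Finset (Finset (Fin n))`; it is a complex when it is closed under taking subsets.
A face `s` has dimension `s.card - 1` (the empty face has dimension `-1`); chains in
dimension `i` are families supported on the faces with `(s.card : ℤ) = i + 1`, and the
boundary map uses the orientation coming from the linear order on `Fin n`.  Since the
empty face is a legitimate face, the resulting homology is *reduced* homology. -/

/-- The simplicial boundary operator (on families indexed by all subsets of `Fin n`). -/
def boundaryMap (R : Type) [CommRing R] :
    ((Finset (Fin n)) → R) →ₗ[R] ((Finset (Fin n)) → R) where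
  toFun f s := ∑ v ∈ sᶜ, ((-1 : R) ^ ((s.filter (fun w => w < v)).card)) * f (insert v s)
  map_add' f g := by
    funext s
    simp [mul_add, Finset.sum_add_distrib]
  map_smul' c f := by
    funext s
    simp only [Pi.smul_apply, smul_eq_mul, RingHom.id_apply, Finset.mul_sum]
    exact Finset.sum_congr rfl fun v _ => by ring

/-- `i`-dimensional chains of `Δ` with coefficients in `R`. -/
def chainGroup (R : Type) [CommRing R] (Δ : Finset (Finset (Fin n))) (i : ℤ) :
    Submodule R ((Finset (Fin n)) → R) where
  carrier := {f | ∀ s : Finset (Fin n), f s ≠ 0 → s ∈ Δ ∧ (s.card : ℤ) = i + 1}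
  add_mem' := by
    intro f g hf hg s hs
    by_cases h1 : f s = 0
    · refine hg s ?_
      intro h2
      apply hs
      show f s + g s = 0
      rw [h1, h2, add_zero]
    · exact hf s h1
  zero_mem' := by intro s hs; exact absurd rfl hs
  smul_mem' := by
    intro c f hf s hs
    refine hf s ?_
    intro h
    apply hs
    show c • f s = 0
    rw [h, smul_zero]

/-- The `i`-th reduced simplicial homology of `Δ` with coefficients in `R`. -/
abbrev reducedHomology (R : Type) [CommRing R] (Δ : Finset (Finset (Fin n))) (i : ℤ) :=
  ↥(chainGroup n R Δ i ⊓ LinearMap.ker (boundaryMap n R)) ⧸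
    Submodule.comap (chainGroup n R Δ i ⊓ LinearMap.ker (boundaryMap n R)).subtype
      (Submodule.map (boundaryMap n R) (chainGroup n R Δ (i + 1)))

/-- The induced subcomplex `Δ_W` on a vertex subset `W`. -/
def induced (Δ : Finset (Finset (Fin n))) (W : Finset (Fin n)) : Finset (Finset (Fin n)) :=
  Δ.filter (fun s => s ⊆ W)

/-- The Stanley–Reisner ideal of `Δ`: generated by the squarefree monomials `x_T` for
non-faces `T`. -/
def srIdeal (Δ : Finset (Finset (Fin n))) : Ideal (MvPolynomial (Fin n) K) :=
  Ideal.span ((fun T : Finset (Fin n) => ∏ v ∈ T, MvPolynomial.X v) '' {T | T ∉ Δ})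

/-! ### Clutters -/

/-- The circuit ideal `I(C̄)` of a `d`-uniform clutter `C` with vertex set `V`: generated by
the squarefree monomials `x_T` for `d`-subsets `T ⊆ V` not in `C`. -/
def circuitIdeal (d : ℕ) (V : Finset (Fin n)) (C : Finset (Finset (Fin n))) :
    Ideal (MvPolynomial (Fin n) K) :=
  Ideal.span ((fun T : Finset (Fin n) => ∏ v ∈ T, MvPolynomial.X v) ''
    {T | T ⊆ V ∧ T.card = d ∧ T ∉ C})

/-- The clique complex `Δ(C)` of a `d`-uniform clutter on vertex set `V`: faces are the
subsets of `V` all of whose `d`-subsets are circuits. -/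
def cliqueCx (d : ℕ) (V : Finset (Fin n)) (C : Finset (Finset (Fin n))) :
    Finset (Finset (Fin n)) :=
  V.powerset.filter (fun G => ∀ T ∈ G.powersetCard d, T ∈ C)

/-- The vertex set of a clutter: all vertices lying in some circuit. -/
def clutterVerts (C : Finset (Finset (Fin n))) : Finset (Fin n) := C.sup id

/-- The set `SC(C)` of submaximal circuits: `(d-1)`-subsets contained in some circuit. -/
def SCset (d : ℕ) (C : Finset (Finset (Fin n))) : Set (Finset (Fin n)) :=
  {e | e.card + 1 = d ∧ ∃ F ∈ C, e ⊆ F}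

/-- The degree `deg_C(e)` of a submaximal circuit. -/
def degC (C : Finset (Finset (Fin n))) (e : Finset (Fin n)) : ℕ :=
  (C.filter (fun F => e ⊆ F)).card

/-- `W` is a clique of the `d`-uniform clutter `C`. -/
def IsClique (d : ℕ) (C : Finset (Finset (Fin n))) (W : Finset (Fin n)) : Prop :=
  ∀ T ∈ W.powersetCard d, T ∈ C

/-- `C` is decomposable, `C = C₁ ⊎ C₂`. -/
def Decomposable (d : ℕ) (C : Finset (Finset (Fin n))) : Prop :=
  ∃ C1 C2 : Finset (Finset (Fin n)), C1 ⊂ C ∧ C2 ⊂ C ∧ C = C1 ∪ C2 ∧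
    (IsClique n d C (clutterVerts n C1 ∩ clutterVerts n C2) ∨
      SCset n d C1 ∩ SCset n d C2 = ∅)

/-- `C` is strongly connected (connected in codimension one). -/
def StronglyConnected (d : ℕ) (C : Finset (Finset (Fin n))) : Prop :=
  ∀ F ∈ C, ∀ G ∈ C,
    Relation.ReflTransGen (fun A B => B ∈ C ∧ (A ∩ B).card + 1 = d) F G

/-- `C` is connected. -/
def ClutterConnected (C : Finset (Finset (Fin n))) : Prop :=
  ∀ v ∈ clutterVerts n C, ∀ w ∈ clutterVerts n C,
    ∃ F ∈ C, ∃ G ∈ C, v ∈ F ∧ w ∈ G ∧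
      Relation.ReflTransGen (fun A B => B ∈ C ∧ (A ∩ B).Nonempty) F G

/-- `C` is a tree: connected, and every nonempty subclutter has a submaximal circuit of
degree one. -/
def IsTree (d : ℕ) (C : Finset (Finset (Fin n))) : Prop :=
  ClutterConnected n C ∧
    ∀ C' ⊆ C, C'.Nonempty → ∃ e ∈ SCset n d C', degC n C' e = 1

/-- `C` (a clutter on `[n]`) is an almost tree: its circuit ideal does not have a `d`-linear
resolution, and every proper subclutter of `C` is a tree. -/
def AlmostTree (d : ℕ) (C : Finset (Finset (Fin n))) : Prop :=
  ¬ HasLinearRes K n (circuitIdeal K n d Finset.univ C) d ∧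
    ∀ C' ⊂ C, IsTree n d C'

/-- `C` (a clutter on `[n]`) is an obstruction to `d`-linearity: its circuit ideal does not
have a `d`-linear resolution, but the circuit ideal of every proper subclutter does. -/
def ObstructionToLin (d : ℕ) (C : Finset (Finset (Fin n))) : Prop :=
  ¬ HasLinearRes K n (circuitIdeal K n d Finset.univ C) d ∧
    ∀ C' ⊂ C, HasLinearRes K n (circuitIdeal K n d (clutterVerts n C') C') d

/-- `C` is minimal to `d`-linearity: an obstruction to `d`-linearity whose clique complex has
dimension `d - 1`. -/
def MinimalToLin (d : ℕ) (C : Finset (Finset (Fin n))) : Prop :=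
  ObstructionToLin K n d C ∧
    (∀ G ∈ cliqueCx n d Finset.univ C, G.card ≤ d) ∧
    (∃ G ∈ cliqueCx n d Finset.univ C, G.card = d)

/-- The simplicial complex `⟨C⟩` generated by the circuits of `C`. -/
def genComplex (C : Finset (Finset (Fin n))) : Finset (Finset (Fin n)) :=
  C.sup Finset.powerset

end ArxivPaper

/-!
If `indeg I_Δ = d + 1`, every set of at most `d` vertices is a face, so `Δ` is the
`(d-1)`-skeleton of the simplex and `I_Δ` is spanned by the monomials whose support has more
than `d` elements. In each nonzero multidegree `b` the Koszul complex `K_•(x_1, …, x_n)` is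
contracted by the homotopy `h(e_U ⊗ x^a) = ± e_{U ∪ {v}} ⊗ x^a / x_v`, where `x_v` carries a
largest exponent of `b` (and `h(e_U ⊗ x^a) = 0` if `v ∈ U`). Dividing a monomial of degree at
least `d + 2` by a variable of largest exponent keeps more than `d` variables in its support, so
`h` maps the chains of `I_Δ ⊗ K_•` of internal degree `j ≥ i + d + 2` to chains of `I_Δ`, and
`β_{i,j}(I_Δ) = 0` there. Together with `β_{0,d+1}(I_Δ) ≠ 0` this gives `reg I_Δ = d + 1`.
The bound `indeg I_Δ ≤ d + 1` holds because any `d + 1` vertices form a non-face.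
-/

namespace ArxivPaper

section SquarefreeMonomials

variable {σ : Type*}

/-- The exponent vector `χ_T` of the squarefree monomial `x_T = ∏_{v ∈ T} x_v`. -/
def chi (T : Finset σ) : σ →₀ ℕ := ∑ u ∈ T, Finsupp.single u 1

lemma chi_apply [DecidableEq σ] (T : Finset σ) (v : σ) : chi T v = if v ∈ T then 1 else 0 := by
  simp [chi, Finsupp.finsetSum_apply, Finsupp.single_apply]

@[simp]
lemma support_chi [DecidableEq σ] (T : Finset σ) : (chi T).support = T := by
  ext v
  simp [chi_apply]

@[simp]
lemma degree_chi (T : Finset σ) : (chi T).degree = T.card := by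
  simp [chi, map_sum]

lemma chi_le_iff [DecidableEq σ] {T : Finset σ} {a : σ →₀ ℕ} : chi T ≤ a ↔ T ⊆ a.support := by
  simp only [Finsupp.le_def, chi_apply, subset_iff, Finsupp.mem_support_iff]
  refine ⟨fun h v hv => ?_, fun h v => ?_⟩
  · have := h v
    rw [if_pos hv] at this
    omega
  · split_ifs with hv
    · have := h hv
      omega
    · exact Nat.zero_le _

lemma add_single_add_chi_erase [DecidableEq σ] (a : σ →₀ ℕ) {U : Finset σ} {w : σ} (hw : w ∈ U) :
    a + Finsupp.single w 1 + chi (U.erase w) = a + chi U := by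
  rw [add_assoc, add_comm (Finsupp.single w 1), chi, chi, sum_erase_add U _ hw]

lemma prod_X_eq_monomial_chi (R : Type*) [CommSemiring R] (T : Finset σ) :
    ∏ v ∈ T, (X v : MvPolynomial σ R) = monomial (chi T) 1 := by
  rw [chi, monomial_sum_one]
  rfl

lemma degree_eq_of_mem_support {R : Type*} [CommSemiring R] {p : MvPolynomial σ R} {m : ℕ}
    (hp : p.IsHomogeneous m) {a : σ →₀ ℕ} (ha : a ∈ p.support) : a.degree = m :=
  (hp.degree_eq_sum_deg_support ha).symm

lemma card_support_le_degree (a : σ →₀ ℕ) : a.support.card ≤ a.degree := by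
  rw [Finsupp.degree_apply, card_eq_sum_ones]
  exact sum_le_sum fun v hv => Nat.one_le_iff_ne_zero.mpr (Finsupp.mem_support_iff.mp hv)

lemma lt_card_support_tsub_single [DecidableEq σ] {a : σ →₀ ℕ} {v : σ} {d : ℕ} (hav : a v ≠ 0)
    (hmax : ∀ w, a w ≤ a v) (hsupp : d < a.support.card) (hdeg : d + 2 ≤ a.degree) :
    d < (a - Finsupp.single v 1).support.card := by
  have herase : a.support.erase v ⊆ (a - Finsupp.single v 1).support := fun w hw => by
    obtain ⟨hwv, hw⟩ := mem_erase.mp hw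
    simpa [Finsupp.single_apply, Ne.symm hwv] using hw
  have hcard := card_le_card herase
  rw [card_erase_of_mem (Finsupp.mem_support_iff.mpr hav)] at hcard
  rcases Nat.lt_or_ge (a v) 2 with hv1 | hv2
  · -- `x^a` is squarefree, so its support has `deg a ≥ d + 2` elements
    have hsq : a.degree = a.support.card := by
      rw [Finsupp.degree_apply, card_eq_sum_ones]
      refine sum_congr rfl fun w hw => ?_
      have := Finsupp.mem_support_iff.mp hw
      have := hmax w
      omega
    omega
  · have hsub : a.support ⊆ (a - Finsupp.single v 1).support := fun w hw => by
      by_cases hwv : w = v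
      · subst hwv
        simp only [Finsupp.mem_support_iff, Finsupp.tsub_apply, Finsupp.single_eq_same]
        omega
      · exact herase (mem_erase.mpr ⟨hwv, hw⟩)
    exact hsupp.trans_le (card_le_card hsub)

end SquarefreeMonomials

section Apex

variable {σ : Type*}

/-- A variable carrying a largest exponent of `b`. Any variable of the support would give a
contracting homotopy of the Koszul complex; a largest exponent is what makes the homotopy
preserve the ideal of a skeleton. -/
def apex (b : σ →₀ ℕ) : Option σ :=
  if h : b.support.Nonempty then some (b.support.exists_max_image b h).choose else none

lemma apex_zero : apex (0 : σ →₀ ℕ) = none := by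
  simp [apex]

lemma exists_apex_eq_some {b : σ →₀ ℕ} (hb : b ≠ 0) : ∃ v, apex b = some v := by
  simp [apex, Finsupp.support_nonempty_iff.mpr hb]

lemma apex_eq_some {b : σ →₀ ℕ} {v : σ} (h : apex b = some v) : b v ≠ 0 ∧ ∀ w, b w ≤ b v := by
  unfold apex at h
  split_ifs at h with hb
  obtain rfl := Option.some_inj.mp h
  obtain ⟨hv, hmax⟩ := (b.support.exists_max_image b hb).choose_spec
  refine ⟨Finsupp.mem_support_iff.mp hv, fun w => ?_⟩
  by_cases hw : b w = 0
  · exact hw ▸ Nat.zero_le _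
  · exact hmax w (Finsupp.mem_support_iff.mpr hw)

lemma apex_add_chi_eq_some [DecidableEq σ] {a : σ →₀ ℕ} {U : Finset σ} {v : σ}
    (hv : apex (a + chi U) = some v) (hvU : v ∉ U) : a v ≠ 0 ∧ ∀ w, a w ≤ a v := by
  obtain ⟨h1, h2⟩ := apex_eq_some hv
  simp only [Finsupp.add_apply, chi_apply, if_neg hvU, add_zero] at h1 h2
  exact ⟨h1, fun w => (Nat.le_add_right _ _).trans (h2 w)⟩

lemma single_le_of_apex_add_chi_eq_some [DecidableEq σ] {a : σ →₀ ℕ} {U : Finset σ} {v : σ}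
    (hv : apex (a + chi U) = some v) (hvU : v ∉ U) : Finsupp.single v 1 ≤ a :=
  Finsupp.single_le_iff.mpr (Nat.one_le_iff_ne_zero.mpr (apex_add_chi_eq_some hv hvU).1)

end Apex

section StanleyReisner

variable {K : Type} [Field K] {n : ℕ}

lemma mem_srIdeal_iff {Δ : Finset (Finset (Fin n))} {p : MvPolynomial (Fin n) K} :
    p ∈ srIdeal K n Δ ↔ ∀ a ∈ p.support, ∃ T ∉ Δ, T ⊆ a.support := by
  have hspan : srIdeal K n Δ =
      Ideal.span ((fun s => monomial s (1 : K)) '' (chi '' {T | T ∉ Δ})) := by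
    simp_rw [srIdeal, Set.image_image, prod_X_eq_monomial_chi]
  simp [hspan, mem_ideal_span_monomial_image, chi_le_iff]

lemma mem_srIdeal_iff_of_skeleton {Δ : Finset (Finset (Fin n))} {d : ℕ}
    (hΔ : ∀ T, T ∈ Δ ↔ T.card ≤ d) {p : MvPolynomial (Fin n) K} :
    p ∈ srIdeal K n Δ ↔ ∀ a ∈ p.support, d < a.support.card := by
  rw [mem_srIdeal_iff]
  refine forall₂_congr fun a _ => ⟨?_, fun h => ?_⟩
  · rintro ⟨T, hT, hTa⟩
    exact (not_le.mp ((hΔ T).not.mp hT)).trans_le (card_le_card hTa)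
  · obtain ⟨T, hTa, hT⟩ := exists_subset_card_eq (Nat.succ_le_of_lt h)
    exact ⟨T, fun h => by have := (hΔ T).mp h; omega, hTa⟩

lemma monomial_mem_srIdeal_of_skeleton {Δ : Finset (Finset (Fin n))} {d : ℕ}
    (hΔ : ∀ T, T ∈ Δ ↔ T.card ≤ d) {a : Fin n →₀ ℕ} (ha : d < a.support.card) :
    monomial a (1 : K) ∈ srIdeal K n Δ := by
  rw [mem_srIdeal_iff_of_skeleton hΔ]
  intro b hb
  rwa [mem_singleton.mp (support_monomial_subset hb)]

lemma eq_zero_of_mem_srIdeal_of_skeleton {Δ : Finset (Finset (Fin n))} {d : ℕ}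
    (hΔ : ∀ T, T ∈ Δ ↔ T.card ≤ d) {p : MvPolynomial (Fin n) K} (hp : p ∈ srIdeal K n Δ)
    {m : ℕ} (hpm : p.IsHomogeneous m) (hm : m ≤ d) : p = 0 := by
  by_contra hp0
  obtain ⟨a, ha⟩ := support_nonempty.mpr hp0
  have hdeg := degree_eq_of_mem_support hpm ha
  have := (mem_srIdeal_iff_of_skeleton hΔ).mp hp a ha
  have := card_support_le_degree a
  omega

lemma indeg_srIdeal_le_card {Δ : Finset (Finset (Fin n))} {T : Finset (Fin n)} (hT : T ∉ Δ) :
    indeg K n (srIdeal K n Δ) ≤ T.card := by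
  refine Nat.sInf_le ⟨monomial (chi T) 1, ?_, ?_, isHomogeneous_monomial _ (degree_chi T)⟩
  · rw [← prod_X_eq_monomial_chi]
    exact Ideal.subset_span ⟨T, hT, rfl⟩
  · exact monomial_eq_zero.not.mpr one_ne_zero

lemma indeg_srIdeal_le (Δ : Finset (Finset (Fin n))) : indeg K n (srIdeal K n Δ) ≤ n := by
  by_cases h : ∃ T, T ∉ Δ
  · obtain ⟨T, hT⟩ := h
    exact (indeg_srIdeal_le_card hT).trans (card_le_univ T |>.trans_eq (Fintype.card_fin n))
  · simp only [not_exists, not_not] at h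
    have hbot : srIdeal K n Δ = ⊥ := by simp [srIdeal, h]
    simp [indeg, hbot]

end StanleyReisner

section KoszulSigns

variable {α : Type*} [DecidableEq α]

lemma sum_compl_ite_insert_eq [Fintype α] {M : Type*} [AddCommMonoid M] (T U : Finset α)
    (F : α → M) :
    ∑ v ∈ Tᶜ, (if insert v T = U then F v else 0) =
      ∑ v ∈ U, if T = U.erase v then F v else 0 := by
  rw [← sum_filter, ← sum_filter]
  refine sum_congr (ext fun v => ?_) fun _ _ => rfl
  simp only [mem_filter, mem_compl]
  constructor
  · rintro ⟨hvT, rfl⟩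
    exact ⟨mem_insert_self v T, (erase_insert hvT).symm⟩
  · rintro ⟨hvU, rfl⟩
    exact ⟨notMem_erase v U, insert_erase hvU⟩

lemma card_filter_lt_insert [LinearOrder α] {S : Finset α} {v : α} (hv : v ∉ S) (w : α) :
    ((insert v S).filter (fun u => u < w)).card =
      (S.filter (fun u => u < w)).card + if v < w then 1 else 0 := by
  rw [filter_insert]
  split_ifs with h
  · exact card_insert_of_notMem fun hS => hv (mem_of_mem_filter v hS)
  · rfl

/-- The two ways of passing from `e_S` to `e_{S ∪ {v, w}}` carry opposite signs. -/
lemma koszul_sign_cancel [LinearOrder α] (R : Type*) [CommRing R] {S : Finset α} {v w : α}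
    (hvw : v ≠ w) (hv : v ∉ S) (hw : w ∉ S) :
    (-1 : R) ^ ((insert w S).filter (fun u => u < v)).card *
        (-1 : R) ^ ((insert v S).filter (fun u => u < w)).card +
      (-1 : R) ^ (S.filter (fun u => u < w)).card * (-1 : R) ^ (S.filter (fun u => u < v)).card
      = 0 := by
  rw [card_filter_lt_insert hw, card_filter_lt_insert hv]
  rcases lt_or_gt_of_ne hvw with h | h <;> simp [h, not_lt_of_gt h, pow_succ, mul_comm]

lemma neg_one_pow_mul_self {R : Type*} [Monoid R] [HasDistribNeg R] (k : ℕ) :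
    (-1 : R) ^ k * (-1 : R) ^ k = 1 := by
  rw [← pow_add, ← two_mul, pow_mul, neg_one_sq, one_pow]

lemma neg_one_pow_mul_eq_smul {R A : Type*} [CommRing R] [Ring A] [Algebra R A] (k : ℕ)
    (p : A) : (-1 : A) ^ k * p = (-1 : R) ^ k • p := by
  rw [Algebra.smul_def, map_pow, map_neg, map_one]

end KoszulSigns

section Homotopy

variable (K : Type) [Field K]

/-- `U` is the exterior position of the coefficient, so `a + χ_U` is the multidegree of
`e_U ⊗ x^a`. -/
def divApex {n : ℕ} (U : Finset (Fin n)) (v : Fin n) :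
    MvPolynomial (Fin n) K →ₗ[K] MvPolynomial (Fin n) K :=
  (basisMonomials (Fin n) K).constr K fun a =>
    if apex (a + chi U) = some v then monomial (a - Finsupp.single v 1) 1 else 0

variable (n : ℕ)

local notation "Chain" => Finset (Fin n) → MvPolynomial (Fin n) K

def koszulHomotopy : Chain →ₗ[K] Chain :=
  ∑ U : Finset (Fin n), ∑ v ∈ Uᶜ, (-1 : K) ^ (U.filter (fun w => w < v)).card •
    (LinearMap.single K (fun _ => MvPolynomial (Fin n) K) (insert v U) ∘ₗ divApex K U v ∘ₗ
      LinearMap.proj U)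

/-- The component of multidegree `0`, the only one in which the Koszul complex is not exact. -/
def degreeZeroProj : Chain →ₗ[K] Chain :=
  LinearMap.single K (fun _ => MvPolynomial (Fin n) K) ∅ ∘ₗ monomial 0 ∘ₗ lcoeff K 0 ∘ₗ
    LinearMap.proj ∅

variable {K n}

lemma divApex_monomial (U : Finset (Fin n)) (v : Fin n) (a : Fin n →₀ ℕ) :
    divApex K U v (monomial a 1) =
      if apex (a + chi U) = some v then monomial (a - Finsupp.single v 1) 1 else 0 :=
  (basisMonomials (Fin n) K).constr_basis K _ a

lemma divApex_eq_sum (U : Finset (Fin n)) (v : Fin n) (p : MvPolynomial (Fin n) K) :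
    divApex K U v p = ∑ a ∈ p.support, coeff a p • divApex K U v (monomial a 1) := by
  conv_lhs => rw [p.as_sum]
  rw [map_sum]
  refine sum_congr rfl fun a _ => ?_
  rw [← map_smul, smul_monomial, smul_eq_mul, mul_one]

lemma koszulHomotopy_single (U : Finset (Fin n)) (p : MvPolynomial (Fin n) K) :
    koszulHomotopy K n (Pi.single U p) = ∑ v ∈ Uᶜ, (-1 : K) ^ (U.filter (fun w => w < v)).card •
      Pi.single (insert v U) (divApex K U v p) := by
  rw [koszulHomotopy, LinearMap.sum_apply, sum_eq_single U (fun U' _ hU' => by simp [hU'])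
    (fun h => absurd (mem_univ U) h)]
  simp

lemma koszulD_single (U : Finset (Fin n)) (p : MvPolynomial (Fin n) K) :
    koszulD K n (Pi.single U p) = ∑ w ∈ U, (-1 : K) ^ ((U.erase w).filter (fun u => u < w)).card •
      Pi.single (U.erase w) (X w * p) := by
  funext T
  simp only [koszulD, LinearMap.coe_mk, AddHom.coe_mk, Pi.single_apply, mul_ite, mul_zero,
    Finset.sum_apply, Pi.smul_apply, smul_ite, smul_zero]
  rw [sum_compl_ite_insert_eq]
  refine sum_congr rfl fun w _ => ?_
  split_ifs with h
  · rw [h, neg_one_pow_mul_eq_smul (R := K)]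
  · rfl

lemma koszulD_single_monomial (U : Finset (Fin n)) (a : Fin n →₀ ℕ) :
    koszulD K n (Pi.single U (monomial a 1)) =
      ∑ w ∈ U, (-1 : K) ^ ((U.erase w).filter (fun u => u < w)).card •
        Pi.single (U.erase w) (monomial (a + Finsupp.single w 1) 1) := by
  simp_rw [koszulD_single, X, monomial_mul, one_mul, add_comm]

lemma koszulHomotopy_single_monomial {U : Finset (Fin n)} {a : Fin n →₀ ℕ} {v : Fin n}
    (hv : apex (a + chi U) = some v) :
    koszulHomotopy K n (Pi.single U (monomial a 1)) =
      if v ∈ U then 0 else (-1 : K) ^ (U.filter (fun w => w < v)).card •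
        Pi.single (insert v U) (monomial (a - Finsupp.single v 1) 1) := by
  simp only [koszulHomotopy_single, divApex_monomial, hv, Option.some_inj]
  split_ifs with hvU
  · exact sum_eq_zero fun w hw => by
      rw [if_neg (fun h : v = w => mem_compl.mp hw (h ▸ hvU)), Pi.single_zero, smul_zero]
  · rw [sum_eq_single_of_mem v (mem_compl.mpr hvU) fun w _ hw => by
      rw [if_neg (Ne.symm hw), Pi.single_zero, smul_zero], if_pos rfl]

section

variable {U : Finset (Fin n)} {a : Fin n →₀ ℕ} {v : Fin n}

lemma koszul_homotopy_identity_of_apex_mem (hv : apex (a + chi U) = some v) (hvU : v ∈ U) :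
    koszulD K n (koszulHomotopy K n (Pi.single U (monomial a 1))) +
      koszulHomotopy K n (koszulD K n (Pi.single U (monomial a 1))) =
      Pi.single U (monomial a 1) := by
  have hv' : ∀ w ∈ U, apex (a + Finsupp.single w 1 + chi (U.erase w)) = some v :=
    fun w hw => by rw [add_single_add_chi_erase a hw, hv]
  rw [koszulHomotopy_single_monomial hv, if_pos hvU, map_zero, zero_add,
    koszulD_single_monomial, map_sum, sum_eq_single_of_mem v hvU fun w hw hwv => by
      rw [map_smul, koszulHomotopy_single_monomial (hv' w hw),
        if_pos (mem_erase.mpr ⟨hwv.symm, hvU⟩), smul_zero],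
    map_smul, koszulHomotopy_single_monomial (hv' v hvU), if_neg (notMem_erase v U), smul_smul,
    neg_one_pow_mul_self, one_smul, insert_erase hvU, add_tsub_cancel_right]

/-- Apart from `e_U ⊗ x^a` itself, the terms of `∂h` and `h∂` cancel in pairs indexed by
`w ∈ U`. -/
lemma koszul_homotopy_identity_of_apex_notMem (hv : apex (a + chi U) = some v) (hvU : v ∉ U) :
    koszulD K n (koszulHomotopy K n (Pi.single U (monomial a 1))) +
      koszulHomotopy K n (koszulD K n (Pi.single U (monomial a 1))) =
      Pi.single U (monomial a 1) := by
  have hav := single_le_of_apex_add_chi_eq_some hv hvU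
  have hv' : ∀ w ∈ U, apex (a + Finsupp.single w 1 + chi (U.erase w)) = some v :=
    fun w hw => by rw [add_single_add_chi_erase a hw, hv]
  rw [koszulHomotopy_single_monomial hv, if_neg hvU, map_smul, koszulD_single_monomial,
    sum_insert hvU, erase_insert hvU, tsub_add_cancel_of_le hav, smul_add, smul_smul,
    neg_one_pow_mul_self, one_smul, add_assoc, add_eq_left, koszulD_single_monomial, map_sum,
    smul_sum, ← sum_add_distrib]
  refine sum_eq_zero fun w hw => ?_
  have hvw : v ≠ w := fun h => hvU (h ▸ hw)
  have hsign := koszul_sign_cancel K hvw (fun h => hvU (mem_of_mem_erase h)) (notMem_erase w U)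
  rw [insert_erase hw] at hsign
  rw [map_smul, koszulHomotopy_single_monomial (hv' w hw),
    if_neg fun h => hvU (mem_of_mem_erase h), smul_smul, smul_smul, erase_insert_of_ne hvw,
    tsub_add_eq_add_tsub hav, ← add_smul, hsign, zero_smul]

end

lemma degreeZeroProj_apply (f : Chain) :
    degreeZeroProj K n f = Pi.single (∅ : Finset (Fin n)) (monomial 0 (coeff 0 (f ∅))) :=
  rfl

lemma degreeZeroProj_single_monomial_of_ne {U : Finset (Fin n)} {a : Fin n →₀ ℕ}
    (h : a + chi U ≠ 0) : degreeZeroProj K n (Pi.single U (monomial a 1)) = 0 := by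
  rw [degreeZeroProj_apply]
  by_cases hU : U = ∅
  · subst hU
    have ha : a ≠ 0 := by simpa [chi] using h
    rw [Pi.single_eq_same, coeff_monomial, if_neg ha, map_zero, Pi.single_zero]
  · rw [Pi.single_eq_of_ne (Ne.symm hU), coeff_zero, map_zero, Pi.single_zero]

lemma koszul_homotopy_identity_zero :
    koszulD K n (koszulHomotopy K n (Pi.single ∅ (monomial 0 1))) +
      koszulHomotopy K n (koszulD K n (Pi.single ∅ (monomial 0 1))) +
      degreeZeroProj K n (Pi.single ∅ (monomial 0 1)) =
      (Pi.single ∅ (monomial 0 1) : Chain) := by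
  have hchi : chi (∅ : Finset (Fin n)) = 0 := by simp [chi]
  have hx : koszulHomotopy K n (Pi.single ∅ (monomial 0 1)) = 0 := by
    refine (koszulHomotopy_single _ _).trans (sum_eq_zero fun v _ => ?_)
    rw [divApex_monomial, zero_add, hchi, apex_zero, if_neg (by simp), Pi.single_zero, smul_zero]
  rw [hx, map_zero, koszulD_single_monomial, sum_empty, map_zero, degreeZeroProj_apply,
    Pi.single_eq_same, coeff_monomial, if_pos rfl, zero_add, zero_add]

variable (K n) in
theorem koszul_homotopy_formula :
    koszulD K n ∘ₗ koszulHomotopy K n + koszulHomotopy K n ∘ₗ koszulD K n + degreeZeroProj K n =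
      LinearMap.id := by
  refine LinearMap.pi_ext' fun U => (basisMonomials (Fin n) K).ext fun a => ?_
  simp only [LinearMap.comp_apply, LinearMap.add_apply, coe_basisMonomials, LinearMap.coe_single,
    LinearMap.id_apply]
  by_cases hb : a + chi U = 0
  · obtain ⟨rfl, hU⟩ := add_eq_zero.mp hb
    obtain rfl : U = ∅ := by rw [← support_chi U, hU, Finsupp.support_zero]
    exact koszul_homotopy_identity_zero
  · obtain ⟨v, hv⟩ := exists_apex_eq_some hb
    rw [degreeZeroProj_single_monomial_of_ne hb, add_zero]
    by_cases hvU : v ∈ U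
    · exact koszul_homotopy_identity_of_apex_mem hv hvU
    · exact koszul_homotopy_identity_of_apex_notMem hv hvU

end Homotopy

section Betti

variable {K : Type} [Field K] {n : ℕ}

local notation "Chain" => Finset (Fin n) → MvPolynomial (Fin n) K

lemma single_mem_chainPiece {I : Ideal (MvPolynomial (Fin n) K)} {i j : ℕ} {T : Finset (Fin n)}
    {p : MvPolynomial (Fin n) K} (hp : p ∈ I) (hpm : p.IsHomogeneous (j - T.card))
    (hT : T.card = i) : Pi.single T p ∈ chainPiece K n I i j := by
  intro T'
  by_cases h : T' = T
  · subst h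
    simp only [Pi.single_eq_same]
    exact ⟨hp, hpm, fun h => absurd hT h⟩
  · rw [Pi.single_eq_of_ne h]
    exact ⟨I.zero_mem, isHomogeneous_zero _ _ _, fun _ => rfl⟩

instance finiteDimensional_chainPiece (I : Ideal (MvPolynomial (Fin n) K)) (i j : ℕ) :
    FiniteDimensional K (chainPiece K n I i j) := by
  let φ : chainPiece K n I i j →ₗ[K] Finset (Fin n) → restrictTotalDegree (Fin n) K j :=
    { toFun f T := ⟨f.1 T, (mem_restrictTotalDegree _ _ _).mpr
        ((f.2 T).2.1.totalDegree_le.trans (Nat.sub_le j _))⟩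
      map_add' _ _ := rfl
      map_smul' _ _ := rfl }
  refine Module.Finite.of_injective φ fun f g h => Subtype.ext (funext fun T => ?_)
  exact congrArg Subtype.val (congrFun h T)

lemma degreeZeroProj_eq_zero_of_mem_chainPiece {I : Ideal (MvPolynomial (Fin n) K)} {i j : ℕ}
    (hj : j ≠ 0) {z : Chain} (hz : z ∈ chainPiece K n I i j) : degreeZeroProj K n z = 0 := by
  have h0 : coeff 0 (z ∅) = 0 := (hz ∅).2.1.coeff_eq_zero (by simpa using Ne.symm hj)
  rw [degreeZeroProj_apply, h0, map_zero, Pi.single_zero]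

/-- By the homotopy formula every cycle `z` is the boundary of `h z`, as soon as `h z` is again
a chain of `I`. -/
lemma bettiNumber_eq_zero_of_koszulHomotopy_mem {I : Ideal (MvPolynomial (Fin n) K)} {i j : ℕ}
    (hj : j ≠ 0)
    (hI : ∀ z ∈ chainPiece K n I i j, koszulHomotopy K n z ∈ chainPiece K n I (i + 1) j) :
    bettiNumber K n I i j = 0 := by
  rw [bettiNumber]
  have : Subsingleton (↥(chainPiece K n I i j ⊓ LinearMap.ker (koszulD K n)) ⧸
      Submodule.comap (chainPiece K n I i j ⊓ LinearMap.ker (koszulD K n)).subtype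
        (Submodule.map (koszulD K n) (chainPiece K n I (i + 1) j))) := by
    rw [Submodule.Quotient.subsingleton_iff, Submodule.eq_top_iff']
    rintro ⟨z, hz, hdz⟩
    refine ⟨koszulHomotopy K n z, hI z hz, ?_⟩
    have := LinearMap.congr_fun (koszul_homotopy_formula K n) z
    rwa [LinearMap.add_apply, LinearMap.add_apply, LinearMap.comp_apply, LinearMap.comp_apply,
      LinearMap.mem_ker.mp hdz, map_zero, add_zero, degreeZeroProj_eq_zero_of_mem_chainPiece hj hz,
      add_zero] at this
  exact Module.finrank_zero_of_subsingleton

lemma isHomogeneous_divApex {U : Finset (Fin n)} {v : Fin n} (hvU : v ∉ U)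
    {p : MvPolynomial (Fin n) K} {m : ℕ} (hp : p.IsHomogeneous m) :
    (divApex K U v p).IsHomogeneous (m - 1) := by
  rw [divApex_eq_sum]
  refine IsHomogeneous.sum _ _ _ fun a ha => isHomog_smul K n _ ?_
  rw [divApex_monomial]
  split_ifs with hv
  · refine isHomogeneous_monomial _ ?_
    have hdeg := congrArg Finsupp.degree
      (tsub_add_cancel_of_le (single_le_of_apex_add_chi_eq_some hv hvU))
    rw [map_add, Finsupp.degree_single, degree_eq_of_mem_support hp ha] at hdeg
    omega
  · exact isHomogeneous_zero _ _ _

lemma divApex_mem_srIdeal_of_skeleton {Δ : Finset (Finset (Fin n))} {d : ℕ}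
    (hΔ : ∀ T, T ∈ Δ ↔ T.card ≤ d) {U : Finset (Fin n)} {v : Fin n} (hvU : v ∉ U)
    {p : MvPolynomial (Fin n) K} (hp : p ∈ srIdeal K n Δ) {m : ℕ} (hpm : p.IsHomogeneous m)
    (hm : d + 2 ≤ m) : divApex K U v p ∈ srIdeal K n Δ := by
  rw [divApex_eq_sum]
  refine Ideal.sum_mem _ fun a ha => Submodule.smul_of_tower_mem _ _ ?_
  rw [divApex_monomial]
  split_ifs with hv
  · obtain ⟨hav, hmax⟩ := apex_add_chi_eq_some hv hvU
    refine monomial_mem_srIdeal_of_skeleton hΔ (lt_card_support_tsub_single hav hmax ?_ ?_)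
    · exact (mem_srIdeal_iff_of_skeleton hΔ).mp hp a ha
    · rwa [degree_eq_of_mem_support hpm ha]
  · exact zero_mem _

lemma koszulHomotopy_mem_chainPiece_of_skeleton {Δ : Finset (Finset (Fin n))} {d i j : ℕ}
    (hΔ : ∀ T, T ∈ Δ ↔ T.card ≤ d) (hj : i + d + 2 ≤ j) {z : Chain}
    (hz : z ∈ chainPiece K n (srIdeal K n Δ) i j) :
    koszulHomotopy K n z ∈ chainPiece K n (srIdeal K n Δ) (i + 1) j := by
  rw [koszulHomotopy, LinearMap.sum_apply]
  refine Submodule.sum_mem _ fun U _ => ?_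
  rw [LinearMap.sum_apply]
  refine Submodule.sum_mem _ fun v hv => Submodule.smul_mem _ _ ?_
  have hvU : v ∉ U := mem_compl.mp hv
  obtain ⟨hzI, hzm, hz0⟩ := hz U
  simp only [LinearMap.comp_apply, LinearMap.proj_apply, LinearMap.coe_single]
  by_cases hU : U.card = i
  · refine single_mem_chainPiece (divApex_mem_srIdeal_of_skeleton hΔ hvU hzI hzm (by omega)) ?_
      (by rw [card_insert_of_notMem hvU, hU])
    rw [card_insert_of_notMem hvU, ← Nat.sub_sub]
    exact isHomogeneous_divApex hvU hzm
  · rw [hz0 hU, map_zero, Pi.single_zero]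
    exact zero_mem _

lemma bettiNumber_eq_zero_of_skeleton {Δ : Finset (Finset (Fin n))} {d i j : ℕ}
    (hΔ : ∀ T, T ∈ Δ ↔ T.card ≤ d) (hj : i + d + 2 ≤ j) :
    bettiNumber K n (srIdeal K n Δ) i j = 0 :=
  bettiNumber_eq_zero_of_koszulHomotopy_mem (by omega) fun _ hz =>
    koszulHomotopy_mem_chainPiece_of_skeleton hΔ hj hz

lemma chainPiece_one_eq_bot_of_skeleton {Δ : Finset (Finset (Fin n))} {d : ℕ}
    (hΔ : ∀ T, T ∈ Δ ↔ T.card ≤ d) : chainPiece K n (srIdeal K n Δ) 1 (d + 1) = ⊥ := by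
  refine eq_bot_iff.mpr fun f hf => (Submodule.mem_bot K).mpr (funext fun T => ?_)
  obtain ⟨hfI, hfm, hf0⟩ := hf T
  by_cases hT : T.card = 1
  · exact eq_zero_of_mem_srIdeal_of_skeleton hΔ hfI hfm (by omega)
  · exact hf0 hT

/-- `e_∅ ⊗ x_T` for a `(d+1)`-set `T` is a cycle that no boundary can hit, since `I_Δ` has no
nonzero elements of degree `d`. -/
lemma bettiNumber_zero_ne_zero_of_skeleton {Δ : Finset (Finset (Fin n))} {d : ℕ}
    (hΔ : ∀ T, T ∈ Δ ↔ T.card ≤ d) (hn : d < n) :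
    bettiNumber K n (srIdeal K n Δ) 0 (d + 1) ≠ 0 := by
  rw [bettiNumber, chainPiece_one_eq_bot_of_skeleton hΔ, Submodule.map_bot, Submodule.comap_bot,
    Submodule.ker_subtype, (Submodule.quotEquivOfEqBot _ rfl).finrank_eq]
  obtain ⟨T, -, hT⟩ := exists_subset_card_eq (s := (univ : Finset (Fin n))) (n := d + 1)
    (by rw [card_univ, Fintype.card_fin]; omega)
  have hx : (Pi.single ∅ (monomial (chi T) 1) : Chain) ∈
      chainPiece K n (srIdeal K n Δ) 0 (d + 1) ⊓ LinearMap.ker (koszulD K n) := by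
    refine Submodule.mem_inf.mpr ⟨single_mem_chainPiece ?_ ?_ card_empty, ?_⟩
    · exact monomial_mem_srIdeal_of_skeleton hΔ (by rw [support_chi, hT]; omega)
    · exact isHomogeneous_monomial _ (by rw [degree_chi, hT, card_empty, Nat.sub_zero])
    · rw [LinearMap.mem_ker, koszulD_single, sum_empty]
  refine (Module.finrank_pos_iff_exists_ne_zero.mpr ⟨⟨_, hx⟩, fun h => ?_⟩).ne'
  have : (Pi.single ∅ (monomial (chi T) 1) : Chain) ∅ = 0 := congrFun (congrArg Subtype.val h) ∅
  rw [Pi.single_eq_same] at this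
  exact one_ne_zero (monomial_eq_zero.mp this)

lemma reg_srIdeal_of_skeleton {Δ : Finset (Finset (Fin n))} {d : ℕ}
    (hΔ : ∀ T, T ∈ Δ ↔ T.card ≤ d) (hn : d < n) :
    reg K n (srIdeal K n Δ) = d + 1 := by
  refine IsGreatest.csSup_eq ⟨⟨0, d + 1, bettiNumber_zero_ne_zero_of_skeleton hΔ hn, by simp⟩, ?_⟩
  rintro m ⟨i, j, hb, rfl⟩
  by_contra h
  exact hb (bettiNumber_eq_zero_of_skeleton hΔ (by omega))

end Betti

theorem indeg_le_and_linearity_general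
    (K : Type) [Field K] (n d : ℕ) (Δ : Finset (Finset (Fin n)))
    (hdim : (∀ s ∈ Δ, s.card ≤ d) ∧ ∃ s ∈ Δ, s.card = d) :
    indeg K n (srIdeal K n Δ) ≤ d + 1 ∧
      (indeg K n (srIdeal K n Δ) = d + 1 ↔ HasLinearRes K n (srIdeal K n Δ) (d + 1)) := by
  have hle_n := indeg_srIdeal_le (K := K) Δ
  have hle : indeg K n (srIdeal K n Δ) ≤ d + 1 := by
    rcases le_or_gt n d with hn | hn
    · omega
    · obtain ⟨T, -, hT⟩ := exists_subset_card_eq (s := (univ : Finset (Fin n))) (n := d + 1)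
        (by rw [card_univ, Fintype.card_fin]; omega)
      exact hT ▸ indeg_srIdeal_le_card fun hTΔ => by have := hdim.1 T hTΔ; omega
  refine ⟨hle, fun h => ⟨?_, h⟩, fun h => h.2⟩
  have hΔ : ∀ T, T ∈ Δ ↔ T.card ≤ d := fun T =>
    ⟨hdim.1 T, fun hT => by_contra fun hTΔ => by have := indeg_srIdeal_le_card (K := K) hTΔ; omega⟩
  exact_mod_cast reg_srIdeal_of_skeleton hΔ (by omega)

theorem indeg_le_and_linearity
    (K : Type) [Field K] (n d : ℕ) (Δ : Finset (Finset (Fin n)))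
    (hdc : ∀ s ∈ Δ, ∀ t ⊆ s, t ∈ Δ)
    (hdim : (∀ s ∈ Δ, s.card ≤ d) ∧ ∃ s ∈ Δ, s.card = d)
    (hindeg : ∀ m : ℕ, m < d → ∀ p ∈ srIdeal K n Δ, p.IsHomogeneous m → p = 0) :
    indeg K n (srIdeal K n Δ) ≤ d + 1 ∧
      (indeg K n (srIdeal K n Δ) = d + 1 ↔ HasLinearRes K n (srIdeal K n Δ) (d + 1)) :=
  indeg_le_and_linearity_general K n d Δ hdim

end ArxivPaper
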